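/- arXiv:1805.05641 — 3 statements merged into one kernel-verified Lean document; each statement's English description precedes it below -/
import Mathlib

section
/- Let A be a real k×n matrix (1 ≤ k ≤ n), let κ_1, …, κ_n and c_1, …, c_n be arbitrary real numbers, and set f_i(x) = Σ_{j=1}^n A_{ij} e^{κ_j x + c_j} for i = 1, …, k. Then for every x ∈ ℝ the Wronskian determinant satisfies det( f_i^{(l−1)}(x) )_{i,l=1}^{k} = Σ_I Δ_I(A) · Π_{i_1<i_2, i_1,i_2∈I} (κ_{i_2} − κ_{i_1}) · e^{Σ_{i∈I} (κ_i x + c_i)}, where the sum is over all k-element subsets I = {i_1 < … < i_k} of {1,…,n} and Δ_I(A) is the k×k minor of A on the columns indexed by I. -/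
/-!
The Wronskian matrix factors as `A * E` with `E j l = e^{κ_j x + c_j} κ_j^l`. By Cauchy–Binet,
`det (A * E)` is the sum over `k`-subsets `I` of columns of `Δ_I(A) · det E_I`, and `E_I` is a
Vandermonde matrix in the `κ_i, i ∈ I`, with rows scaled by `e^{κ_i x + c_i}`.

Cauchy–Binet comes from expanding `det (A * B)` multilinearly in the columns: this gives a sum
over all maps `p : Fin k → ι` in which non-injective `p` contribute nothing. Every injective `p`
takes values in exactly one `k`-subset `I`, its image, and the terms with values in `I` add up to
`det A_I * det B_I`, by the same expansion applied to the square matrices `A_I` and `B_I`.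
-/

open scoped BigOperators

/-- The `k × k` maximal minor of a real `k × n` matrix `A` on the set of columns `I`
(defined to be `0` when `I` does not have exactly `k` elements). -/
noncomputable def maxMinor {k n : ℕ} (A : Matrix (Fin k) (Fin n) ℝ)
    (I : Finset (Fin n)) : ℝ :=
  if h : I.card = k then
    (A.submatrix id fun j => ((I.orderIsoOfFin h) j : Fin n)).det
  else 0

/-- The Vandermonde-type product `Π_{i₁ < i₂, i₁,i₂ ∈ I} (κ i₂ - κ i₁)`. -/
noncomputable def vandProd {n : ℕ} (κ : Fin n → ℝ) (I : Finset (Fin n)) : ℝ :=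
  ∏ p ∈ (I ×ˢ I).filter fun p => p.1 < p.2, (κ p.2 - κ p.1)

open Finset Matrix Real

theorem Finset.filter_powersetCard_forall_mem_eq_singleton {m ι : Type*} [Fintype m] [Fintype ι]
    [DecidableEq ι] {p : m → ι} (hp : Function.Injective p) :
    {I ∈ powersetCard (Fintype.card m) (univ : Finset ι) | ∀ i, p i ∈ I} = {univ.image p} := by
  have hcard : (univ.image p).card = Fintype.card m := by
    rw [card_image_of_injective _ hp, card_univ]
  ext I
  simp only [mem_filter, mem_powersetCard, subset_univ, true_and, mem_singleton]
  constructor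
  · rintro ⟨hI, hpI⟩
    refine (eq_of_subset_of_card_le (fun j hj => ?_) (by rw [hI, hcard])).symm
    obtain ⟨i, -, rfl⟩ := mem_image.1 hj
    exact hpI i
  · rintro rfl
    exact ⟨hcard, fun i => mem_image_of_mem p (mem_univ i)⟩

namespace Matrix
variable {R : Type*} [CommRing R] {m ι : Type*} [Fintype m] [DecidableEq m]

theorem det_mul_eq_sum_fun [Fintype ι] (A : Matrix m ι R) (B : Matrix ι m R) :
    (A * B).det = ∑ p : m → ι, (∏ i, B (p i) i) * (A.submatrix id p).det := by
  have hrows : (A * B)ᵀ = fun i => ∑ j, B j i • Aᵀ j := by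
    ext i l
    simp [mul_apply, mul_comm]
  calc (A * B).det = detRowAlternating (fun i => ∑ j, B j i • Aᵀ j) := by
        rw [← hrows]; exact (det_transpose _).symm
    _ = ∑ p : m → ι, detRowAlternating (fun i => B (p i) i • Aᵀ (p i)) :=
        MultilinearMap.map_sum _ _
    _ = _ := by
        refine sum_congr rfl fun p _ => ?_
        rw [AlternatingMap.map_smul_univ, smul_eq_mul, ← det_transpose (A.submatrix id p)]
        rfl

theorem det_submatrix_eq_zero_of_not_injective (A : Matrix m ι R) {p : m → ι}
    (hp : ¬Function.Injective p) : (A.submatrix id p).det = 0 := by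
  obtain ⟨a, b, hab, hne⟩ := Function.not_injective_iff.1 hp
  exact det_zero_of_column_eq hne fun r => by simp [hab]

theorem det_mul_eq_sum_powersetCard_sum_piFinset [Fintype ι] [DecidableEq ι] (A : Matrix m ι R)
    (B : Matrix ι m R) :
    (A * B).det = ∑ I ∈ powersetCard (Fintype.card m) univ,
      ∑ p ∈ Fintype.piFinset fun _ => I, (∏ i, B (p i) i) * (A.submatrix id p).det := by
  rw [det_mul_eq_sum_fun, sum_comm' (t' := univ)
    (s' := fun p => {I ∈ powersetCard (Fintype.card m) univ | ∀ i, p i ∈ I})]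
  · refine sum_congr rfl fun p _ => ?_
    by_cases hp : Function.Injective p
    · rw [filter_powersetCard_forall_mem_eq_singleton hp, sum_singleton]
    · simp [det_submatrix_eq_zero_of_not_injective A hp]
  · intro I p
    simp [Fintype.mem_piFinset]

theorem sum_piFinset_image_eq_det_mul_det [DecidableEq ι] (A : Matrix m ι R) (B : Matrix ι m R)
    {e : m → ι} (he : Function.Injective e) :
    ∑ p ∈ Fintype.piFinset (fun _ => univ.image e), (∏ i, B (p i) i) * (A.submatrix id p).det =
      (A.submatrix id e).det * (B.submatrix e id).det := by
  rw [← det_mul, det_mul_eq_sum_fun, Fintype.piFinset_image, Fintype.piFinset_univ,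
    sum_image fun p _ q _ hpq => funext fun i => he (congrFun hpq i)]
  rfl

theorem det_mul_eq_sum_subsets [Fintype ι] [LinearOrder ι] {k : ℕ} (A : Matrix (Fin k) ι R)
    (B : Matrix ι (Fin k) R) :
    (A * B).det = ∑ I : {I : Finset ι // I.card = k},
      (A.submatrix id (I.1.orderEmbOfFin I.2)).det *
        (B.submatrix (I.1.orderEmbOfFin I.2) id).det := by
  rw [det_mul_eq_sum_powersetCard_sum_piFinset, Fintype.card_fin,
    sum_subtype (p := fun I => I.card = k) _ (by simp)]
  refine Fintype.sum_congr _ _ fun ⟨I, hI⟩ => ?_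
  rw [← sum_piFinset_image_eq_det_mul_det A B (I.orderEmbOfFin hI).injective,
    image_orderEmbOfFin_univ]

end Matrix

theorem Finset.prod_Ioi_orderEmbOfFin {ι M : Type*} [LinearOrder ι] [CommMonoid M] {k : ℕ}
    (I : Finset ι) (h : I.card = k) (g : ι → ι → M) :
    ∏ i, ∏ j ∈ Ioi i, g (I.orderEmbOfFin h i) (I.orderEmbOfFin h j) =
      ∏ p ∈ (I ×ˢ I).filter (fun p => p.1 < p.2), g p.1 p.2 := by
  set s := (I.orderEmbOfFin h).toEmbedding
  have hpairs : ((univ ×ˢ univ).filter fun q : Fin k × Fin k => q.1 < q.2).map (s.prodMap s) =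
      (I ×ˢ I).filter (fun p => p.1 < p.2) := by
    rw [← map_orderEmbOfFin_univ I h, ← prodMap_map_product, filter_map]
    congr 2
    ext q
    exact (I.orderEmbOfFin h).lt_iff_lt.symm
  rw [← hpairs, prod_map, prod_filter, prod_product]
  refine prod_congr rfl fun i _ => ?_
  rw [← prod_filter]
  congr 1
  ext j
  simp

theorem Matrix.det_submatrix_orderEmbOfFin_mul_vandermonde {R ι : Type*} [CommRing R]
    [LinearOrder ι] {k : ℕ} (w v : ι → R) (I : Finset ι) (h : I.card = k) :
    ((of fun j (l : Fin k) => w j * v j ^ (l : ℕ)).submatrix (I.orderEmbOfFin h) id).det =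
      (∏ i ∈ I, w i) * ∏ p ∈ (I ×ˢ I).filter (fun p => p.1 < p.2), (v p.2 - v p.1) := by
  have hrows : (of fun j (l : Fin k) => w j * v j ^ (l : ℕ)).submatrix (I.orderEmbOfFin h) id =
      of fun a b => w (I.orderEmbOfFin h a) * vandermonde (v ∘ I.orderEmbOfFin h) a b := by
    ext a b
    simp [vandermonde]
  rw [hrows, det_mul_column, det_vandermonde]
  simp only [Function.comp_apply]
  rw [prod_Ioi_orderEmbOfFin I h fun i j => v j - v i,
    Fintype.prod_equiv (I.orderIsoOfFin h).toEquiv (fun i => w (I.orderEmbOfFin h i))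
      (fun i : I => w i) fun _ => rfl,
    prod_coe_sort I w]

theorem iteratedDeriv_exp_mul_add (m : ℕ) (a b : ℝ) :
    iteratedDeriv m (fun x => exp (a * x + b)) = fun x => a ^ m * exp (a * x + b) := by
  have hsplit : (fun x => exp (a * x + b)) = fun x => exp b * exp (a * x) := by
    funext x
    rw [← exp_add, add_comm]
  funext x
  rw [hsplit, iteratedDeriv_const_mul_field, iteratedDeriv_exp_const_mul, exp_add]
  ring

theorem iteratedDeriv_sum_mul_exp {ι : Type*} [Fintype ι] (w κ c : ι → ℝ) (m : ℕ) (x : ℝ) :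
    iteratedDeriv m (fun x => ∑ j, w j * exp (κ j * x + c j)) x =
      ∑ j, w j * (κ j ^ m * exp (κ j * x + c j)) := by
  rw [iteratedDeriv_fun_sum fun j _ => by fun_prop]
  refine sum_congr rfl fun j _ => ?_
  rw [iteratedDeriv_const_mul_field, iteratedDeriv_exp_mul_add]

theorem maxMinor_eq_det_submatrix {k n : ℕ} (A : Matrix (Fin k) (Fin n) ℝ) {I : Finset (Fin n)}
    (h : I.card = k) : maxMinor A I = (A.submatrix id (I.orderEmbOfFin h)).det := by
  rw [maxMinor, dif_pos h]
  rfl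

theorem wronskian_of_exponential_sums_eq_sum_minors_general
    (k n : ℕ)
    (A : Matrix (Fin k) (Fin n) ℝ) (κ c : Fin n → ℝ)
    (f : Fin k → ℝ → ℝ)
    (hf : ∀ i x, f i x = ∑ j, A i j * Real.exp (κ j * x + c j))
    (x : ℝ) :
    Matrix.det (Matrix.of fun i l : Fin k => iteratedDeriv (l : ℕ) (f i) x) =
      ∑ I ∈ Finset.powersetCard k (Finset.univ : Finset (Fin n)),
        maxMinor A I * vandProd κ I * Real.exp (∑ i ∈ I, (κ i * x + c i)) := by
  set E : Matrix (Fin n) (Fin k) ℝ := of fun j l => exp (κ j * x + c j) * κ j ^ (l : ℕ)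
  have hW : (of fun i l : Fin k => iteratedDeriv l (f i) x) = A * E := by
    ext i l
    rw [of_apply, funext (hf i), iteratedDeriv_sum_mul_exp, mul_apply]
    simp only [E, of_apply, mul_comm (κ _ ^ _)]
  rw [hW, det_mul_eq_sum_subsets,
    sum_subtype (p := fun I : Finset (Fin n) => I.card = k) _ (by simp [mem_powersetCard])]
  refine Fintype.sum_congr _ _ fun ⟨I, hI⟩ => ?_
  rw [det_submatrix_orderEmbOfFin_mul_vandermonde, maxMinor_eq_det_submatrix A hI, vandProd,
    exp_sum]
  ring

/-- the Wronskian of `f_i(x) = Σ_j A_{ij} e^{κ_j x + c_j}` equals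
`Σ_I Δ_I(A) · Π_{i₁<i₂∈I}(κ_{i₂}-κ_{i₁}) · e^{Σ_{i∈I}(κ_i x + c_i)}`,
the sum running over all `k`-element subsets `I` of the columns. -/
theorem wronskian_of_exponential_sums_eq_sum_minors
    (k n : ℕ) (hk : 1 ≤ k) (hkn : k ≤ n)
    (A : Matrix (Fin k) (Fin n) ℝ) (κ c : Fin n → ℝ)
    (f : Fin k → ℝ → ℝ)
    (hf : ∀ i x, f i x = ∑ j, A i j * Real.exp (κ j * x + c j))
    (x : ℝ) :
    Matrix.det (Matrix.of fun i l : Fin k => iteratedDeriv (l : ℕ) (f i) x) =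
      ∑ I ∈ Finset.powersetCard k (Finset.univ : Finset (Fin n)),
        maxMinor A I * vandProd κ I * Real.exp (∑ i ∈ I, (κ i * x + c i)) :=
  wronskian_of_exponential_sums_eq_sum_minors_general k n A κ c f hf x
end

section
/- Let a, b, c, d be real numbers and A the 2×4 matrix [[1, 0, a, b], [0, 1, c, d]]. Then all six maximal 2×2 minors Δ_{12}(A), Δ_{13}(A), Δ_{14}(A), Δ_{23}(A), Δ_{24}(A), Δ_{34}(A) are strictly positive if and only if there exist positive real numbers w_{13}, w_{23}, w_{14}, w_{24} such that a = −w_{13}, b = −w_{13}(w_{14} + w_{24}), c = w_{23}, d = w_{23} w_{24}; moreover, when they exist these positive weights are unique (namely w_{13} = −a, w_{23} = c, w_{24} = d/c, w_{14} = (bc − ad)/(ac)). -/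
/-!
The six minors of `[[1, 0, a, b], [0, 1, c, d]]` are `1, c, d, -a, -b, ad - bc`, so total
positivity means `a < 0 < c, d` and `bc < ad`. Reading the weights off
as `w₁₃ = -a`, `w₂₃ = c`, `w₂₄ = d / c` and `w₁₄ = (bc - ad) / (ac)` inverts the
parametrization, and these formulas are forced, which gives uniqueness.
-/

/-- The `2 × 2` minor of a `2 × 4` real matrix `A` on the columns `i` and `j`. -/
def minor2 (A : Matrix (Fin 2) (Fin 4) ℝ) (i j : Fin 4) : ℝ :=
  A 0 i * A 1 j - A 0 j * A 1 i

theorem minor2_pos_iff_of_rowEchelon (a b c d : ℝ) :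
    let A : Matrix (Fin 2) (Fin 4) ℝ := !![1, 0, a, b; 0, 1, c, d]
    (0 < minor2 A 0 1 ∧ 0 < minor2 A 0 2 ∧ 0 < minor2 A 0 3 ∧
        0 < minor2 A 1 2 ∧ 0 < minor2 A 1 3 ∧ 0 < minor2 A 2 3) ↔
      (a < 0 ∧ b < 0 ∧ 0 < c ∧ 0 < d ∧ b * c < a * d) := by
  simp only [minor2, Matrix.of_apply, Matrix.cons_val', Matrix.cons_val_zero,
    Matrix.cons_val_one, Matrix.cons_val, Matrix.empty_val', Matrix.cons_val_fin_one]
  constructor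
  · rintro ⟨-, hc, hd, ha, hb, hbc⟩
    exact ⟨by linarith, by linarith, by linarith, by linarith, by linarith⟩
  · rintro ⟨ha, hb, hc, hd, hbc⟩
    exact ⟨by norm_num, by linarith, by linarith, by linarith, by linarith, by linarith⟩

section LeWeights

variable {K : Type*} [Field K] [LinearOrder K] [IsStrictOrderedRing K]

theorem exists_leWeights_of_lt {a b c d : K} (ha : a < 0) (hc : 0 < c) (hd : 0 < d)
    (hbc : b * c < a * d) :
    ∃ w13 w23 w14 w24 : K, 0 < w13 ∧ 0 < w23 ∧ 0 < w14 ∧ 0 < w24 ∧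
      a = -w13 ∧ b = -w13 * (w14 + w24) ∧ c = w23 ∧ d = w23 * w24 := by
  have hac : a * c < 0 := mul_neg_of_neg_of_pos ha hc
  have hw14 : 0 < (b * c - a * d) / (a * c) := div_pos_of_neg_of_neg (by linarith) hac
  have ha0 : a ≠ 0 := ha.ne
  have hc0 : c ≠ 0 := hc.ne'
  refine ⟨-a, c, (b * c - a * d) / (a * c), d / c, neg_pos.2 ha, hc, hw14, div_pos hd hc,
    (neg_neg a).symm, ?_, rfl, (mul_div_cancel₀ d hc.ne').symm⟩
  field_simp
  ring

theorem lt_of_leWeights {a b c d w13 w23 w14 w24 : K} (h13 : 0 < w13) (h23 : 0 < w23)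
    (h14 : 0 < w14) (h24 : 0 < w24) (ha : a = -w13) (hb : b = -w13 * (w14 + w24))
    (hc : c = w23) (hd : d = w23 * w24) :
    a < 0 ∧ b < 0 ∧ 0 < c ∧ 0 < d ∧ b * c < a * d := by
  subst ha hb hc hd
  refine ⟨neg_neg_of_pos h13, ?_, h23, mul_pos h23 h24, ?_⟩
  · nlinarith [mul_pos h13 (add_pos h14 h24)]
  · nlinarith [mul_pos (mul_pos h13 h23) h14]

theorem leWeights_eq {a b c d w13 w23 w14 w24 : K} (h13 : 0 < w13) (h23 : 0 < w23)
    (ha : a = -w13) (hb : b = -w13 * (w14 + w24)) (hc : c = w23) (hd : d = w23 * w24) :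
    w13 = -a ∧ w23 = c ∧ w24 = d / c ∧ w14 = (b * c - a * d) / (a * c) := by
  subst ha hb hc hd
  refine ⟨(neg_neg w13).symm, rfl, (mul_div_cancel_left₀ w24 h23.ne').symm, ?_⟩
  rw [eq_div_iff (mul_ne_zero (neg_ne_zero.2 h13.ne') h23.ne')]
  ring

end LeWeights

/-- the matrix `A = [[1,0,a,b],[0,1,c,d]]` has all six maximal minors
strictly positive iff there are positive weights `w₁₃, w₂₃, w₁₄, w₂₄` with
`a = -w₁₃`, `b = -w₁₃(w₁₄+w₂₄)`, `c = w₂₃`, `d = w₂₃w₂₄`; moreover such weights are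
unique: `w₁₃ = -a`, `w₂₃ = c`, `w₂₄ = d/c`, `w₁₄ = (bc-ad)/(ac)`. -/
theorem grtp24_weight_parametrization
    (a b c d : ℝ)
    (A : Matrix (Fin 2) (Fin 4) ℝ)
    (hA : A = !![1, 0, a, b; 0, 1, c, d]) :
    ((0 < minor2 A 0 1 ∧ 0 < minor2 A 0 2 ∧ 0 < minor2 A 0 3 ∧
        0 < minor2 A 1 2 ∧ 0 < minor2 A 1 3 ∧ 0 < minor2 A 2 3) ↔
      (∃ w13 w23 w14 w24 : ℝ,
        0 < w13 ∧ 0 < w23 ∧ 0 < w14 ∧ 0 < w24 ∧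
        a = -w13 ∧ b = -w13 * (w14 + w24) ∧ c = w23 ∧ d = w23 * w24)) ∧
    (∀ w13 w23 w14 w24 : ℝ,
      0 < w13 → 0 < w23 → 0 < w14 → 0 < w24 →
      a = -w13 → b = -w13 * (w14 + w24) → c = w23 → d = w23 * w24 →
      w13 = -a ∧ w23 = c ∧ w24 = d / c ∧ w14 = (b * c - a * d) / (a * c)) := by
  subst hA
  refine ⟨(minor2_pos_iff_of_rowEchelon a b c d).trans ⟨?_, ?_⟩, ?_⟩
  · rintro ⟨ha, -, hc, hd, hbc⟩
    exact exists_leWeights_of_lt ha hc hd hbc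
  · rintro ⟨w13, w23, w14, w24, h13, h23, h14, h24, ha, hb, hc, hd⟩
    exact lt_of_leWeights h13 h23 h14 h24 ha hb hc hd
  · intro w13 w23 w14 w24 h13 h23 _ _ ha hb hc hd
    exact leWeights_eq h13 h23 ha hb hc hd
end

section
/- Let w_{14}, w_{23}, w_{24} > 0 and A, B ∈ ℝ satisfy (w_{14} + w_{24})A + w_{14}w_{23}B ≠ 0 and A + w_{23}B ≠ 0. For real ξ define ζ̃_2(ξ) = −ξ³(ξ − 1)[(w_{14} + w_{24})A + w_{14}w_{23}B] / ( w_{23}(ξ − 1)[w_{14}(ξ³ + ξ + 1) + w_{24}(1 − ξ²)]B + ξ²[(ξ² − 1)w_{14} + (1 − ξ)w_{24}]A ), and ζ_2(ξ) = (ξ²/ζ̃_2(ξ) + 1)/(1 − ξ²) (defined for all sufficiently large ξ, for which the denominators are nonzero). Then lim_{ξ→∞} ζ_2(ξ) = w_{14}(A + w_{23}B) / ( (w_{14} + w_{24})A + w_{23}w_{14}B ). -/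
/-!
The denominator of `ζ̃₂(ξ)` vanishes at `ξ = 1`, like its numerator; after cancelling this
factor, `ζ₂(ξ)` is a quotient of two cubics in `ξ`. Dividing both by `ξ³` writes `ζ₂(ξ)` as a
rational function of `u = 1/ξ` whose denominator `N (u² - 1)` does not vanish at `u = 0`, so the
limit is its value there, the quotient `w₁₄(A + w₂₃B) / N` of the leading coefficients.
-/

open Filter Topology

noncomputable section

variable (w14 w23 w24 A B : ℝ)

def zetaTilde2 (ξ : ℝ) : ℝ :=
  -(ξ ^ 3 * (ξ - 1) * ((w14 + w24) * A + w14 * w23 * B)) /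
    (w23 * (ξ - 1) * (w14 * (ξ ^ 3 + ξ + 1) + w24 * (1 - ξ ^ 2)) * B +
      ξ ^ 2 * ((ξ ^ 2 - 1) * w14 + (1 - ξ) * w24) * A)

def zeta2 (ξ : ℝ) : ℝ := (ξ ^ 2 / zetaTilde2 w14 w23 w24 A B ξ + 1) / (1 - ξ ^ 2)

/-- The denominator of `zetaTilde2 ξ`, divided by `ξ³ (ξ - 1)` and written in `u = 1/ξ`. -/
def reducedDenomAtInv (u : ℝ) : ℝ :=
  w23 * B * (w14 * (1 + u ^ 2 + u ^ 3) + w24 * (u ^ 3 - u)) + A * (w14 * (1 + u) - w24 * u)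

def zeta2AtInv (u : ℝ) : ℝ :=
  (u ^ 2 * ((w14 + w24) * A + w14 * w23 * B) - reducedDenomAtInv w14 w23 w24 A B u) /
    (((w14 + w24) * A + w14 * w23 * B) * (u ^ 2 - 1))

variable {w14 w23 w24 A B}

theorem zeta2_eq_zeta2AtInv (hN : (w14 + w24) * A + w14 * w23 * B ≠ 0) {ξ : ℝ} (hξ : 1 < ξ) :
    zeta2 w14 w23 w24 A B ξ = zeta2AtInv w14 w23 w24 A B ξ⁻¹ := by
  have hξ0 : ξ ≠ 0 := by positivity
  have hξ1 : ξ - 1 ≠ 0 := sub_ne_zero.mpr hξ.ne'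
  have hξ2 : 1 - ξ ^ 2 ≠ 0 := by nlinarith
  have denom_factor :
      w23 * (ξ - 1) * (w14 * (ξ ^ 3 + ξ + 1) + w24 * (1 - ξ ^ 2)) * B +
        ξ ^ 2 * ((ξ ^ 2 - 1) * w14 + (1 - ξ) * w24) * A =
      ξ ^ 3 * (ξ - 1) * reducedDenomAtInv w14 w23 w24 A B ξ⁻¹ := by
    unfold reducedDenomAtInv
    field_simp
    ring
  unfold zeta2 zetaTilde2 zeta2AtInv
  rw [denom_factor, div_div_eq_mul_div]
  field_simp
  ring

theorem zeta2AtInv_zero (hN : (w14 + w24) * A + w14 * w23 * B ≠ 0) :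
    zeta2AtInv w14 w23 w24 A B 0 = w14 * (A + w23 * B) / ((w14 + w24) * A + w14 * w23 * B) := by
  unfold zeta2AtInv reducedDenomAtInv
  field_simp
  ring

theorem continuousAt_zeta2AtInv_zero (hN : (w14 + w24) * A + w14 * w23 * B ≠ 0) :
    ContinuousAt (zeta2AtInv w14 w23 w24 A B) 0 := by
  unfold zeta2AtInv reducedDenomAtInv
  exact ContinuousAt.div (by fun_prop) (by fun_prop) (mul_ne_zero hN (by norm_num))

theorem tendsto_zeta2_atTop (hN : (w14 + w24) * A + w14 * w23 * B ≠ 0) :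
    Tendsto (zeta2 w14 w23 w24 A B) atTop
      (𝓝 (w14 * (A + w23 * B) / ((w14 + w24) * A + w14 * w23 * B))) := by
  rw [← zeta2AtInv_zero hN]
  refine ((continuousAt_zeta2AtInv_zero hN).tendsto.comp tendsto_inv_atTop_zero).congr' ?_
  filter_upwards [eventually_gt_atTop 1] with ξ hξ
  exact (zeta2_eq_zeta2AtInv hN hξ).symm

end

theorem divisor_point_limit_on_gamma13_general
    (w14 w23 w24 A B : ℝ)
    (hN : (w14 + w24) * A + w14 * w23 * B ≠ 0) :
    Tendsto (fun ξ : ℝ =>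
        (ξ ^ 2 /
            (-(ξ ^ 3 * (ξ - 1) * ((w14 + w24) * A + w14 * w23 * B)) /
              (w23 * (ξ - 1) * (w14 * (ξ ^ 3 + ξ + 1) + w24 * (1 - ξ ^ 2)) * B +
                ξ ^ 2 * ((ξ ^ 2 - 1) * w14 + (1 - ξ) * w24) * A)) + 1) /
          (1 - ξ ^ 2))
      atTop
      (nhds (w14 * (A + w23 * B) / ((w14 + w24) * A + w23 * w14 * B))) := by
  rw [mul_comm w23 w14]
  exact tendsto_zeta2_atTop hN

/-- the divisor coordinate `ζ₂(ξ)`, obtained applying the coordinate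
change `ζ = (ξ²/ζ̃ + 1)/(1-ξ²)` to
`ζ̃₂(ξ) = -ξ³(ξ-1)[(w₁₄+w₂₄)A + w₁₄w₂₃B] /
( w₂₃(ξ-1)[w₁₄(ξ³+ξ+1)+w₂₄(1-ξ²)]B + ξ²[(ξ²-1)w₁₄+(1-ξ)w₂₄]A )`,
tends to `w₁₄(A + w₂₃B)/((w₁₄+w₂₄)A + w₂₃w₁₄B)` as `ξ → ∞`. -/
theorem divisor_point_limit_on_gamma13
    (w14 w23 w24 A B : ℝ)
    (h14 : 0 < w14) (h23 : 0 < w23) (h24 : 0 < w24)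
    (hN : (w14 + w24) * A + w14 * w23 * B ≠ 0)
    (hD : A + w23 * B ≠ 0) :
    Tendsto (fun ξ : ℝ =>
        (ξ ^ 2 /
            (-(ξ ^ 3 * (ξ - 1) * ((w14 + w24) * A + w14 * w23 * B)) /
              (w23 * (ξ - 1) * (w14 * (ξ ^ 3 + ξ + 1) + w24 * (1 - ξ ^ 2)) * B +
                ξ ^ 2 * ((ξ ^ 2 - 1) * w14 + (1 - ξ) * w24) * A)) + 1) /
          (1 - ξ ^ 2))
      atTop
      (nhds (w14 * (A + w23 * B) / ((w14 + w24) * A + w23 * w14 * B))) :=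
  divisor_point_limit_on_gamma13_general w14 w23 w24 A B hN
end
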